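/- arXiv:1802.03076 — 2 statements merged into one kernel-verified Lean document; each statement's English description precedes it below -/
import Mathlib

section
/- Let A be a unital associative k-algebra that is free as a k-module on a basis B = {φ_ω} such that the product of any two basis elements is a scalar multiple of a basis element: φ_α φ_β = μ_{α,β} φ_m with μ_{α,β} ∈ k. Then the autopoietic cochains form a subcomplex of the Hochschild cochain complex (Hom_k(A^{⊗*}, A), δ): if f is autopoietic in degree n then δf is autopoietic in degree n+1. The same holds for strictly autopoietic cochains. -/
variable {k A B : Type} [CommRing k] [Ring A] [Algebra k A]

/-- Hochschild cochains `Hom_k(A^{⊗n}, A)` for `A` free on the basis `B`, modeled by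
their values on tuples of basis elements. -/
abbrev ACochain (A B : Type) (n : ℕ) : Type := (Fin n → B) → A

/-- Simplicial cochains `Hom_k(A^{⊗n}, k)`, modeled by values on tuples of basis
elements. -/
abbrev SCochain (k B : Type) (n : ℕ) : Type := (Fin n → B) → k

/-- The ordered product `φ_1 φ_2 ⋯ φ_n ∈ A` of a tuple of basis elements. -/
noncomputable def aprod (bas : Module.Basis B k A) {n : ℕ} (φ : Fin n → B) : A :=
  (List.ofFn fun i => bas (φ i)).prod

/-- A cochain is (strictly) autopoietic if
`f(φ_1 ⊗ ⋯ ⊗ φ_n) = λ_{φ_1,…,φ_n} · (φ_1 φ_2 ⋯ φ_n)` for all basis elements `φ_i`. -/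
def IsAP (bas : Module.Basis B k A) {n : ℕ} (f : ACochain A B n) : Prop :=
  ∀ φ : Fin n → B, ∃ c : k, f φ = c • aprod bas φ

/-- Merge the `i`-th and `(i+1)`-st entries of a tuple of basis elements using the
basis-level product `m`. -/
def bmerge (m : B → B → B) {n : ℕ} (φ : Fin (n + 1) → B) (i : Fin n) : Fin n → B := fun j =>
  if (j : ℕ) < i then φ j.castSucc
  else if (j : ℕ) = i then m (φ j.castSucc) (φ j.succ)
  else φ j.succ

/-- The Hochschild coboundary, expressed via the structure constants
`φ_α φ_β = μ_{α,β} φ_{m(α,β)}`. -/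
noncomputable def adelta (bas : Module.Basis B k A) (μ : B → B → k) (m : B → B → B) (n : ℕ) :
    ACochain A B n →ₗ[k] ACochain A B (n + 1) :=
  (LinearMap.pi fun φ =>
      (LinearMap.mulLeft k (bas (φ 0))).comp (LinearMap.proj (Fin.tail φ)))
  + (∑ i : Fin n, LinearMap.pi fun φ =>
      (((-1 : k) ^ ((i : ℕ) + 1)) * μ (φ i.castSucc) (φ i.succ)) •
        (LinearMap.proj (bmerge m φ i) : ACochain A B n →ₗ[k] A))
  + ((-1 : k) ^ (n + 1)) •
      LinearMap.pi fun φ =>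
        (LinearMap.mulRight k (bas (φ (Fin.last n)))).comp (LinearMap.proj (Fin.init φ))

/-! Autopoiesis is the pointwise condition `f φ ∈ k ∙ (φ_1 ⋯ φ_n)`, which is stable under sums
and scalars. Each term of `(δf)(φ_1, …, φ_{n+1})` lies in `k ∙ (φ_1 ⋯ φ_{n+1})`: the outer ones by
associativity, the inner ones because `φ_i φ_{i+1} = μ φ_{m}` recovers the full product from the
merged one up to the scalar `μ`. -/

lemma aprod_eq_mul_aprod_tail (bas : Module.Basis B k A) {n : ℕ} (φ : Fin (n + 1) → B) :
    aprod bas φ = bas (φ 0) * aprod bas (Fin.tail φ) := by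
  simp [aprod, List.ofFn_succ, Fin.tail]

lemma aprod_eq_aprod_init_mul (bas : Module.Basis B k A) {n : ℕ} (φ : Fin (n + 1) → B) :
    aprod bas φ = aprod bas (Fin.init φ) * bas (φ (Fin.last n)) := by
  rw [aprod, List.ofFn_succ', List.prod_concat]
  rfl

lemma bmerge_zero (m : B → B → B) {n : ℕ} (φ : Fin (n + 2) → B) :
    bmerge m φ 0 = Fin.cons (m (φ 0) (φ 1)) (Fin.tail (Fin.tail φ)) := by
  funext j
  refine Fin.cases ?_ (fun j => ?_) j <;> simp [bmerge, Fin.tail]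

lemma bmerge_succ (m : B → B → B) {n : ℕ} (φ : Fin (n + 2) → B) (i : Fin n) :
    bmerge m φ i.succ = Fin.cons (φ 0) (bmerge m (Fin.tail φ) i) := by
  funext j
  refine Fin.cases ?_ (fun j => ?_) j
  · simp [bmerge]
  · simp only [bmerge, Fin.cons_succ, Fin.tail, Fin.val_succ, Nat.succ_lt_succ_iff,
      Nat.succ_inj, Fin.castSucc_succ]

lemma smul_aprod_bmerge (bas : Module.Basis B k A) (μ : B → B → k) (m : B → B → B)
    (hmul : ∀ a b : B, bas a * bas b = μ a b • bas (m a b)) {n : ℕ} (φ : Fin (n + 1) → B)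
    (i : Fin n) : μ (φ i.castSucc) (φ i.succ) • aprod bas (bmerge m φ i) = aprod bas φ := by
  induction n with
  | zero => exact i.elim0
  | succ n ih =>
    rw [aprod_eq_mul_aprod_tail bas φ]
    cases i using Fin.cases with
    | zero =>
      rw [bmerge_zero, aprod_eq_mul_aprod_tail, Fin.cons_zero, Fin.tail_cons, Fin.castSucc_zero,
        Fin.succ_zero_eq_one, ← smul_mul_assoc, ← hmul,
        aprod_eq_mul_aprod_tail bas (Fin.tail φ), mul_assoc]
      rfl
    | succ i =>
      rw [bmerge_succ, aprod_eq_mul_aprod_tail, Fin.cons_zero, Fin.tail_cons, ← mul_smul_comm]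
      exact congrArg (bas (φ 0) * ·) (ih (Fin.tail φ) i)

lemma isAP_iff_mem_span (bas : Module.Basis B k A) {n : ℕ} (f : ACochain A B n) :
    IsAP bas f ↔ ∀ φ, f φ ∈ k ∙ aprod bas φ := by
  simp only [IsAP, Submodule.mem_span_singleton, eq_comm]

lemma mul_mem_span_aprod_of_mem_tail (bas : Module.Basis B k A) {n : ℕ} (φ : Fin (n + 1) → B)
    {x : A} (hx : x ∈ k ∙ aprod bas (Fin.tail φ)) : bas (φ 0) * x ∈ k ∙ aprod bas φ := by
  obtain ⟨c, rfl⟩ := Submodule.mem_span_singleton.mp hx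
  exact Submodule.mem_span_singleton.mpr ⟨c, by rw [aprod_eq_mul_aprod_tail, mul_smul_comm]⟩

lemma mul_mem_span_aprod_of_mem_init (bas : Module.Basis B k A) {n : ℕ} (φ : Fin (n + 1) → B)
    {x : A} (hx : x ∈ k ∙ aprod bas (Fin.init φ)) :
    x * bas (φ (Fin.last n)) ∈ k ∙ aprod bas φ := by
  obtain ⟨c, rfl⟩ := Submodule.mem_span_singleton.mp hx
  exact Submodule.mem_span_singleton.mpr ⟨c, by rw [aprod_eq_aprod_init_mul, smul_mul_assoc]⟩

lemma smul_mem_span_aprod_of_mem_bmerge (bas : Module.Basis B k A) (μ : B → B → k)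
    (m : B → B → B) (hmul : ∀ a b : B, bas a * bas b = μ a b • bas (m a b)) {n : ℕ}
    (φ : Fin (n + 1) → B) (i : Fin n) {x : A} (hx : x ∈ k ∙ aprod bas (bmerge m φ i)) :
    μ (φ i.castSucc) (φ i.succ) • x ∈ k ∙ aprod bas φ := by
  obtain ⟨c, rfl⟩ := Submodule.mem_span_singleton.mp hx
  exact Submodule.mem_span_singleton.mpr
    ⟨c, by rw [smul_comm, smul_aprod_bmerge bas μ m hmul]⟩

lemma adelta_apply (bas : Module.Basis B k A) (μ : B → B → k) (m : B → B → B) {n : ℕ}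
    (f : ACochain A B n) (φ : Fin (n + 1) → B) :
    adelta bas μ m n f φ = bas (φ 0) * f (Fin.tail φ)
      + ∑ i : Fin n, ((-1 : k) ^ ((i : ℕ) + 1) * μ (φ i.castSucc) (φ i.succ)) • f (bmerge m φ i)
      + (-1 : k) ^ (n + 1) • (f (Fin.init φ) * bas (φ (Fin.last n))) := by
  simp [adelta, Finset.sum_apply]

/-- For `A` a unital associative `k`-algebra, free as a `k`-module on a
basis `B` whose products satisfy `φ_α φ_β = μ_{α,β} φ_{m(α,β)}`, the (strictly)
autopoietic cochains form a subcomplex of the Hochschild cochain complex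
`(Hom_k(A^{⊗*}, A), δ)`: if `f` is autopoietic in degree `n` then `δf` is autopoietic in
degree `n + 1` (strictly autopoietic cochains included via the degree-zero condition
`f(1) = λ·e`, the empty product being the unit). -/
theorem stmt_7 (bas : Module.Basis B k A) (μ : B → B → k) (m : B → B → B)
    (hmul : ∀ a b : B, bas a * bas b = μ a b • bas (m a b)) :
    ∀ (n : ℕ) (f : ACochain A B n), IsAP bas f → IsAP bas (adelta bas μ m n f) := by
  intro n f hf
  rw [isAP_iff_mem_span] at hf ⊢
  intro φ
  rw [adelta_apply]
  refine add_mem (add_mem ?_ (Submodule.sum_mem _ fun i _ => ?_)) (Submodule.smul_mem _ _ ?_)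
  · exact mul_mem_span_aprod_of_mem_tail bas φ (hf _)
  · rw [mul_smul]
    exact Submodule.smul_mem _ _ (smul_mem_span_aprod_of_mem_bmerge bas μ m hmul φ i (hf _))
  · exact mul_mem_span_aprod_of_mem_init bas φ (hf _)
end

section
/- Let A be a unital associative k-algebra free as a k-module on a basis B with φ_α φ_β = μ_{α,β} φ_m (μ_{α,β} ∈ k) for all basis elements. If f ∈ Hom_k(A^{⊗p}, A) and g ∈ Hom_k(A^{⊗q}, A) are autopoietic, then the Gerstenhaber cup product f ⋅_G g ∈ Hom_k(A^{⊗(p+q)}, A), defined by (f ⋅_G g)(a_1 ⊗ ⋯ ⊗ a_{p+q}) = f(a_1 ⊗ ⋯ ⊗ a_p)·g(a_{p+1} ⊗ ⋯ ⊗ a_{p+q}), is autopoietic. -/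
variable {k A B : Type} [CommRing k] [Ring A] [Algebra k A]

/-- The Gerstenhaber cup product
`(f ⋅_G g)(a_1 ⊗ ⋯ ⊗ a_{p+q}) = f(a_1 ⊗ ⋯ ⊗ a_p) · g(a_{p+1} ⊗ ⋯ ⊗ a_{p+q})`. -/
def gcup {p q : ℕ} (f : ACochain A B p) (g : ACochain A B q) : ACochain A B (p + q) :=
  fun φ => f (fun i => φ (Fin.castAdd q i)) * g (fun i => φ (Fin.natAdd p i))

theorem aprod_add (bas : Module.Basis B k A) {p q : ℕ} (φ : Fin (p + q) → B) :
    aprod bas φ =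
      aprod bas (fun i => φ (Fin.castAdd q i)) * aprod bas (fun i => φ (Fin.natAdd p i)) := by
  rw [aprod, List.ofFn_add, List.prod_append]
  rfl

theorem IsAP.gcup {bas : Module.Basis B k A} {p q : ℕ} {f : ACochain A B p}
    {g : ACochain A B q} (hf : IsAP bas f) (hg : IsAP bas g) : IsAP bas (gcup f g) := by
  intro φ
  obtain ⟨c, hc⟩ := hf fun i => φ (Fin.castAdd q i)
  obtain ⟨d, hd⟩ := hg fun i => φ (Fin.natAdd p i)
  exact ⟨c * d, by rw [_root_.gcup, hc, hd, smul_mul_smul_comm, aprod_add]⟩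

theorem stmt_8_general (bas : Module.Basis B k A) :
    ∀ (p q : ℕ) (f : ACochain A B p) (g : ACochain A B q),
      IsAP bas f → IsAP bas g → IsAP bas (gcup f g) :=
  fun _ _ _ _ hf hg => hf.gcup hg

/-- If `f` and `g` are autopoietic Hochschild cochains on an algebra `A`
free on a basis closed under multiplication up to scalars, then their Gerstenhaber cup
product `f ⋅_G g` is autopoietic. -/
theorem stmt_8 (bas : Module.Basis B k A) (μ : B → B → k) (m : B → B → B)
    (hmul : ∀ a b : B, bas a * bas b = μ a b • bas (m a b)) :
    ∀ (p q : ℕ) (f : ACochain A B p) (g : ACochain A B q),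
      IsAP bas f → IsAP bas g → IsAP bas (gcup f g) :=
  stmt_8_general bas
end
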